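/- Fix n ≥ 1 and regard s_n = s_n(χ) as a function of the parameter χ > 0. Then lim_{χ→∞} ‖Δs_n(χ) − p_{n−1}‖₂ = 0. -/

import Mathlib

/-!
Write `q = Δs_n − p_{n−1}`. Monicity puts `q` in `W_{n−2}`, so `𝒢q ∈ W_{n−1}` and `p_{n−1} ⊥ q`,
i.e. `⟨Δs_n, q⟩₂ = ‖q‖₂²`. Testing the Sobolev orthogonality of `s_n` against `𝒢q` gives
`χ‖q‖₂² = −⟨s_n, 𝒢q⟩₂ ≤ C‖s_n‖₂‖q‖₂`, and since `s_n` minimises the Sobolev norm among monic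
elements, `‖s_n‖₂ ≤ ‖P_n‖_S = O(√χ)`. Hence `‖q‖₂ = O(χ^{-1/2})`.
-/

open Filter RealInnerProductSpace

variable {H : Type*} [NormedAddCommGroup H] [InnerProductSpace ℝ H]

/-- `Wlt P n` is the span of `P 0, …, P (n-1)`; thus `Wlt P 0 = ⊥ = W_{-1}` and
`Wlt P (n+1)` is the space `W_n = span{P_0, …, P_n}`. -/
def Wlt (P : ℕ → H) (n : ℕ) : Submodule ℝ H := Submodule.span ℝ (P '' Set.Iio n)

/-- `Wtot P` is the space `W = ⋃ₙ Wₙ` of all polynomials. -/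
def Wtot (P : ℕ → H) : Submodule ℝ H := Submodule.span ℝ (Set.range P)

/-- The Sobolev inner product `⟨f, g⟩_S = ⟨f, g⟩₂ + χ⟨Δf, Δg⟩₂`. -/
noncomputable def innerS (Δ : H →ₗ[ℝ] H) (χ : ℝ) (f g : H) : ℝ :=
  ⟪ f, g ⟫ + χ * ⟪ Δ f, Δ g ⟫

/-- The Sobolev norm `‖f‖_S = √(‖f‖₂² + χ‖Δf‖₂²)`. -/
noncomputable def normS (Δ : H →ₗ[ℝ] H) (χ : ℝ) (f : H) : ℝ :=
  Real.sqrt (‖f‖ ^ 2 + χ * ‖Δ f‖ ^ 2)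

section Spaces

variable {P : ℕ → H}

lemma Wlt_zero (P : ℕ → H) : Wlt P 0 = ⊥ := by
  simp [Wlt]

lemma Wlt_le_Wtot (P : ℕ → H) (n : ℕ) : Wlt P n ≤ Wtot P :=
  Submodule.span_mono (Set.image_subset_range _ _)

lemma Wlt_succ_le_comap {Δ : H →ₗ[ℝ] H} (hΔ0 : Δ (P 0) = 0)
    (hΔsucc : ∀ n, Δ (P (n + 1)) = P n) (n : ℕ) :
    Wlt P (n + 1) ≤ (Wlt P n).comap Δ := by
  refine Submodule.span_le.mpr ?_
  rintro _ ⟨k, hk, rfl⟩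
  cases k with
  | zero => simp [hΔ0]
  | succ j =>
    rw [SetLike.mem_coe, Submodule.mem_comap, hΔsucc]
    exact Submodule.subset_span ⟨j, Nat.lt_of_succ_lt_succ hk, rfl⟩

lemma map_mem_Wlt_succ {G : H →ₗ[ℝ] H}
    (hGmap : ∀ n, ∀ u ∈ Wlt P (n + 1), G u ∈ Wlt P (n + 2)) :
    ∀ n, ∀ u ∈ Wlt P n, G u ∈ Wlt P (n + 1)
  | 0, u, hu => by
    rw [Wlt_zero, Submodule.mem_bot] at hu
    simp [hu]
  | n + 1, u, hu => hGmap n u hu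

end Spaces

section Sobolev

variable {Δ : H →ₗ[ℝ] H} {χ : ℝ}

lemma innerS_add_add_self (f g : H) :
    innerS Δ χ (f + g) (f + g) = innerS Δ χ f f + 2 * innerS Δ χ f g + innerS Δ χ g g := by
  simp only [innerS, map_add, real_inner_add_add_self, real_inner_comm g f, real_inner_comm (Δ g)]
  ring

lemma innerS_self_nonneg (hχ : 0 ≤ χ) (f : H) : 0 ≤ innerS Δ χ f f := by
  unfold innerS
  have := real_inner_self_nonneg (x := Δ f)
  have := real_inner_self_nonneg (x := f)
  positivity

lemma normS_eq_sqrt_innerS (f : H) : normS Δ χ f = Real.sqrt (innerS Δ χ f f) := by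
  simp only [normS, innerS, real_inner_self_eq_norm_sq]

lemma norm_le_normS (hχ : 0 ≤ χ) (f : H) : ‖f‖ ≤ normS Δ χ f :=
  Real.le_sqrt_of_sq_le (le_add_of_nonneg_right (mul_nonneg hχ (sq_nonneg _)))

lemma normS_le_of_innerS_eq_zero (hχ : 0 ≤ χ) {V : Submodule ℝ H} {s f : H} (hsf : s - f ∈ V)
    (horth : ∀ w ∈ V, innerS Δ χ s w = 0) : normS Δ χ s ≤ normS Δ χ f := by
  have hfs : f - s ∈ V := by simpa using V.neg_mem hsf
  have hexp := innerS_add_add_self (Δ := Δ) (χ := χ) s (f - s)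
  rw [add_sub_cancel, horth _ hfs] at hexp
  rw [normS_eq_sqrt_innerS, normS_eq_sqrt_innerS]
  exact Real.sqrt_le_sqrt (by linarith [innerS_self_nonneg (Δ := Δ) hχ (f - s)])

lemma tendsto_normS_div_atTop (f : H) :
    Tendsto (fun χ : ℝ => normS Δ χ f / χ) atTop (nhds 0) := by
  have hlim : Tendsto (fun χ : ℝ => Real.sqrt (‖f‖ ^ 2 / χ ^ 2 + ‖Δ f‖ ^ 2 / χ)) atTop
      (nhds 0) := by
    have h := ((tendsto_const_nhds (x := ‖f‖ ^ 2)).div_atTop (tendsto_pow_atTop two_ne_zero)).add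
      ((tendsto_const_nhds (x := ‖Δ f‖ ^ 2)).div_atTop tendsto_id)
    simpa using h.sqrt
  refine hlim.congr' ?_
  filter_upwards [eventually_gt_atTop (0 : ℝ)] with χ hχ
  have hsplit : ‖f‖ ^ 2 / χ ^ 2 + ‖Δ f‖ ^ 2 / χ = (‖f‖ ^ 2 + χ * ‖Δ f‖ ^ 2) / χ ^ 2 := by
    field_simp
  rw [hsplit, Real.sqrt_div' _ (by positivity), Real.sqrt_sq hχ.le, normS]

end Sobolev

lemma mul_norm_le_of_innerS_eq_zero {Δ G : H →ₗ[ℝ] H} {χ C : ℝ} {s q : H} (hC : 0 ≤ C)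
    (horth : innerS Δ χ s (G q) = 0) (hΔG : Δ (G q) = q)
    (hsq : ⟪Δ s, q⟫ = ‖q‖ ^ 2) (hGq : ‖G q‖ ≤ C * ‖q‖) : χ * ‖q‖ ≤ C * ‖s‖ := by
  rw [innerS, hΔG, hsq] at horth
  have hsq_le : χ * ‖q‖ ^ 2 ≤ C * ‖s‖ * ‖q‖ :=
    calc χ * ‖q‖ ^ 2 = -⟪s, G q⟫ := by linarith
      _ ≤ ‖s‖ * ‖G q‖ := (neg_le_abs _).trans (abs_real_inner_le_norm _ _)
      _ ≤ ‖s‖ * (C * ‖q‖) := mul_le_mul_of_nonneg_left hGq (norm_nonneg _)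
      _ = C * ‖s‖ * ‖q‖ := by ring
  rcases (norm_nonneg q).eq_or_lt with hq | hq
  · rw [← hq, mul_zero]
    positivity
  · exact le_of_mul_le_mul_right (by rwa [sq, ← mul_assoc] at hsq_le) hq

lemma norm_map_sub_le_mul_normS_div {P p : ℕ → H} {Δ G : H →ₗ[ℝ] H}
    (hΔ0 : Δ (P 0) = 0) (hΔsucc : ∀ n, Δ (P (n + 1)) = P n)
    (hGinv : ∀ u ∈ Wtot P, Δ (G u) = u)
    (hGmap : ∀ n, ∀ u ∈ Wlt P (n + 1), G u ∈ Wlt P (n + 2))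
    {C : ℝ} (hC : 0 ≤ C) (hGbound : ∀ u ∈ Wtot P, ‖G u‖ ≤ C * ‖u‖)
    {m : ℕ} (hpmonic : p m - P m ∈ Wlt P m) (hportho : ∀ w ∈ Wlt P m, ⟪p m, w⟫ = 0)
    {χ : ℝ} (hχ : 0 < χ) {s : H} (hsmonic : s - P (m + 1) ∈ Wlt P (m + 1))
    (hsortho : ∀ w ∈ Wlt P (m + 1), innerS Δ χ s w = 0) :
    ‖Δ s - p m‖ ≤ C * normS Δ χ (P (m + 1)) / χ := by
  set q := Δ s - p m
  have hq : q ∈ Wlt P m := by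
    have hΔs : Δ s - P m ∈ Wlt P m := by
      simpa [hΔsucc] using Wlt_succ_le_comap hΔ0 hΔsucc m hsmonic
    simpa [q] using (Wlt P m).sub_mem hΔs hpmonic
  have hqW : q ∈ Wtot P := Wlt_le_Wtot P m hq
  have hsq : ⟪Δ s, q⟫ = ‖q‖ ^ 2 := by
    rw [← real_inner_self_eq_norm_sq, show Δ s = q + p m by simp [q], inner_add_left,
      hportho q hq, add_zero]
  have hkey : χ * ‖q‖ ≤ C * ‖s‖ :=
    mul_norm_le_of_innerS_eq_zero hC (hsortho _ (map_mem_Wlt_succ hGmap m q hq))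
      (hGinv q hqW) hsq (hGbound q hqW)
  have hs : ‖s‖ ≤ normS Δ χ (P (m + 1)) :=
    (norm_le_normS hχ.le s).trans (normS_le_of_innerS_eq_zero hχ.le hsmonic hsortho)
  rw [le_div_iff₀ hχ, mul_comm]
  exact hkey.trans (mul_le_mul_of_nonneg_left hs hC)

theorem statement14_general
    (P : ℕ → H)
    (Δ G : H →ₗ[ℝ] H)
    (hΔ0 : Δ (P 0) = 0) (hΔsucc : ∀ n, Δ (P (n + 1)) = P n)
    (hGinv : ∀ u ∈ Wtot P, Δ (G u) = u)
    (hGmap : ∀ n, ∀ u ∈ Wlt P (n + 1), G u ∈ Wlt P (n + 2))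
    (C : ℝ) (hC : 0 < C)
    (hGbound : ∀ u ∈ Wtot P, ‖G u‖ ≤ C * ‖u‖)
    (p : ℕ → H)
    (hpmonic : ∀ n, p n - P n ∈ Wlt P n)
    (hportho : ∀ n, ∀ w ∈ Wlt P n, ⟪ p n, w ⟫ = 0)
    (s : ℝ → ℕ → H)
    (hsmonic : ∀ χ : ℝ, 0 < χ → ∀ n, s χ n - P n ∈ Wlt P n)
    (hsortho : ∀ χ : ℝ, 0 < χ → ∀ n, ∀ w ∈ Wlt P n, innerS Δ χ (s χ n) w = 0)
    (n : ℕ) (hn : 1 ≤ n)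
    : Tendsto (fun χ : ℝ => ‖Δ (s χ n) - p (n - 1)‖) atTop (nhds 0) := by
  obtain ⟨m, rfl⟩ : ∃ m, n = m + 1 := ⟨n - 1, by omega⟩
  have hmaj : Tendsto (fun χ : ℝ => C * normS Δ χ (P (m + 1)) / χ) atTop (nhds 0) := by
    simpa [mul_div_assoc] using (tendsto_normS_div_atTop (P (m + 1))).const_mul C
  refine squeeze_zero' (Eventually.of_forall fun _ => norm_nonneg _) ?_ hmaj
  filter_upwards [eventually_gt_atTop (0 : ℝ)] with χ hχ
  exact norm_map_sub_le_mul_normS_div hΔ0 hΔsucc hGinv hGmap hC.le hGbound (hpmonic m) (hportho m) hχ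
    (hsmonic χ hχ (m + 1)) (hsortho χ hχ (m + 1))

/-- For fixed `n ≥ 1`, `lim_{χ→∞} ‖Δs_n(χ) − p_{n−1}‖₂ = 0`. -/
theorem statement14
    (P : ℕ → H) (hP : LinearIndependent ℝ P)
    (Δ G : H →ₗ[ℝ] H)
    (hΔ0 : Δ (P 0) = 0) (hΔsucc : ∀ n, Δ (P (n + 1)) = P n)
    (hGsym : ∀ u ∈ Wtot P, ∀ v ∈ Wtot P, ⟪ G u, v ⟫ = ⟪ u, G v ⟫)
    (hGinv : ∀ u ∈ Wtot P, Δ (G u) = u)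
    (hGmap : ∀ n, ∀ u ∈ Wlt P (n + 1), G u ∈ Wlt P (n + 2))
    (C : ℝ) (hC : 0 < C)
    (hGbound : ∀ u ∈ Wtot P, ‖G u‖ ≤ C * ‖u‖)
    (p : ℕ → H)
    (hpmonic : ∀ n, p n - P n ∈ Wlt P n)
    (hportho : ∀ n, ∀ w ∈ Wlt P n, ⟪ p n, w ⟫ = 0)
    (s : ℝ → ℕ → H)
    (hsmonic : ∀ χ : ℝ, 0 < χ → ∀ n, s χ n - P n ∈ Wlt P n)
    (hsortho : ∀ χ : ℝ, 0 < χ → ∀ n, ∀ w ∈ Wlt P n, innerS Δ χ (s χ n) w = 0)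
    (n : ℕ) (hn : 1 ≤ n)
    : Tendsto (fun χ : ℝ => ‖Δ (s χ n) - p (n - 1)‖) atTop (nhds 0) :=
  statement14_general P Δ G hΔ0 hΔsucc hGinv hGmap C hC hGbound p hpmonic hportho s hsmonic hsortho
    n hn
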